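/- arXiv:1806.03422 — 6 statements merged into one kernel-verified Lean document; each statement's English description precedes it below -/
import Mathlib

section
/- Let n ≥ 1 and let H ⊆ ℂⁿ be a ℂ-linear subspace with dim_ℂ H = k. Then for every ε > 0 and every N₀ ∈ ℕ there exist an integer N ≥ N₀ and finite sets X₁, …, Xₙ ⊆ ℂ with |Xᵢ| ≤ N for all i such that |H ∩ (X₁ × ⋯ × Xₙ)| ≥ N^{k − ε}. -/
/-!
Choose a basis `b₁, …, b_k` of `H` and let `G ⊆ ℂ` consist of `1` and the coordinates of the
`bⱼ`. The `ℤ`-modules `P_D = (span_ℤ G)^D` are free of rank `d_D ≤ (D + 1)^|G|`, so `d` grows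
polynomially and for some `D` the ratio `d_{D+1} / d_D` is close enough to `1` that
`d_{D+1} (k - ε) < d_D k`. The points `∑ⱼ xⱼ bⱼ` with every `xⱼ` in the box of radius `R` of
the lattice `P_D` are `(2R + 1)^(k d_D)` points of `H`, and all their coordinates lie in the box
of radius `O(R)` of `P_{D+1}`, which has `O(R)^(d_{D+1})` elements. Letting `R → ∞` gives the
exponent `k - ε`.
-/

open Submodule Module Set Filter Topology Pointwise

namespace Module.Basis

variable {α β V W : Type*} [AddCommGroup V] [AddCommGroup W] (v : Basis α ℤ V)

def box (R : ℕ) : Set V := {x | ∀ a, |v.repr x a| ≤ R}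

theorem box_mono {R R' : ℕ} (h : R ≤ R') : v.box R ⊆ v.box R' :=
  fun _ hx a => (hx a).trans (by exact_mod_cast h)

variable [Fintype α]

theorem box_eq_image [DecidableEq α] (R : ℕ) :
    v.box R = v.equivFun.symm '' ↑(Fintype.piFinset fun _ : α => Finset.Icc (-(R : ℤ)) R) := by
  rw [LinearEquiv.image_symm_eq_preimage]
  ext x
  simp [box, abs_le, Pi.le_def, forall_and]

theorem finite_box (R : ℕ) : (v.box R).Finite := by
  classical
  rw [box_eq_image]
  exact Set.toFinite _ |>.image _

theorem ncard_box (R : ℕ) : (v.box R).ncard = (2 * R + 1) ^ Fintype.card α := by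
  classical
  rw [box_eq_image, Set.ncard_image_of_injective _ v.equivFun.symm.injective, Set.ncard_coe_finset,
    Fintype.card_piFinset, Finset.prod_const, Int.card_Icc, Finset.card_univ]
  congr 1
  omega

theorem repr_map_apply (w : Basis β ℤ W) (f : V →ₗ[ℤ] W) (x : V) (b : β) :
    w.repr (f x) b = ∑ a, v.repr x a * w.repr (f (v a)) b := by
  conv_lhs => rw [← v.sum_repr x]
  simp only [map_sum, map_zsmul, Finsupp.coe_finsetSum, Finset.sum_apply, Finsupp.coe_smul,
    Pi.smul_apply, smul_eq_mul]

theorem exists_mapsTo_box [Fintype β] (w : Basis β ℤ W) (f : V →ₗ[ℤ] W) :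
    ∃ C : ℕ, ∀ R : ℕ, MapsTo f (v.box R) (w.box (C * R)) := by
  refine ⟨∑ a, ∑ b, (w.repr (f (v a)) b).natAbs, fun R x hx b => ?_⟩
  rw [v.repr_map_apply w f x b]
  calc |∑ a, v.repr x a * w.repr (f (v a)) b|
      ≤ ∑ a, (R : ℤ) * |w.repr (f (v a)) b| := by
        refine (Finset.abs_sum_le_sum_abs _ _).trans (Finset.sum_le_sum fun a _ => ?_)
        rw [abs_mul]
        exact mul_le_mul_of_nonneg_right (hx a) (abs_nonneg _)
    _ ≤ ∑ a, (R : ℤ) * ∑ b, |w.repr (f (v a)) b| := by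
        gcongr with a
        exact Finset.single_le_sum (f := fun b => |w.repr (f (v a)) b|) (fun _ _ => abs_nonneg _)
          (Finset.mem_univ b)
    _ = ((∑ a, ∑ b, (w.repr (f (v a)) b).natAbs) * R : ℕ) := by
        push_cast [Int.natCast_natAbs]
        rw [Finset.sum_mul]
        exact Finset.sum_congr rfl fun a _ => mul_comm _ _

end Module.Basis

theorem Finset.coe_pow_subset_image_prod {M : Type*} [CommMonoid M] [DecidableEq M]
    (s : Finset M) (D : ℕ) :
    (s : Set M) ^ D ⊆ ↑((Fintype.piFinset fun _ : s => Finset.range (D + 1)).image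
      fun e => ∏ x : s, (x : M) ^ e x) := by
  induction D with
  | zero =>
    intro y hy
    rw [pow_zero, Set.mem_one] at hy
    simp only [Finset.coe_image, Set.mem_image, Finset.mem_coe, Fintype.mem_piFinset]
    exact ⟨0, by simp, by simp [hy]⟩
  | succ D ih =>
    rintro _ ⟨y, hy, a, ha, rfl⟩
    obtain ⟨e, he, rfl⟩ := Finset.mem_image.mp (ih hy)
    rw [Fintype.mem_piFinset] at he
    refine Finset.mem_image.mpr ⟨e + Pi.single ⟨a, ha⟩ 1, ?_, ?_⟩
    · rw [Fintype.mem_piFinset]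
      intro x
      have hex := Finset.mem_range.mp (he x)
      have hsingle : (Pi.single (⟨a, ha⟩ : s) 1 : s → ℕ) x ≤ 1 := by
        rcases eq_or_ne x ⟨a, ha⟩ with rfl | hx <;> simp [*]
      rw [Finset.mem_range, Pi.add_apply]
      omega
    · simp only [Pi.add_apply, pow_add, Finset.prod_mul_distrib]
      congr 1
      rw [Finset.prod_eq_single ⟨a, ha⟩ (fun x _ hx => by simp [hx]) (by simp)]
      simp

section Filtration

variable {R A : Type*} [CommRing R] [CommRing A] [Algebra R A]

instance Module.Finite.span_finset_pow (s : Finset A) (D : ℕ) :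
    Module.Finite R ↥(span R (s : Set A) ^ D) :=
  Module.Finite.iff_fg.mpr ((fg_span s.finite_toSet).pow D)

theorem finrank_span_finset_pow_le [StrongRankCondition R] (s : Finset A) (D : ℕ) :
    finrank R ↥(span R (s : Set A) ^ D) ≤ (D + 1) ^ s.card := by
  classical
  set exponents := Fintype.piFinset fun _ : s => Finset.range (D + 1)
  set monomials := exponents.image fun e => ∏ x : s, (x : A) ^ e x
  rw [span_pow]
  calc finrank R ↥(span R ((s : Set A) ^ D))
      ≤ finrank R ↥(span R (monomials : Set A)) :=
        Submodule.finrank_mono (span_mono (s.coe_pow_subset_image_prod D))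
    _ ≤ monomials.card := finrank_span_finset_le_card monomials
    _ ≤ exponents.card := Finset.card_image_le
    _ = (D + 1) ^ s.card := by simp [exponents]

theorem one_mem_span_pow {s : Set A} (hs : 1 ∈ s) (D : ℕ) : (1 : A) ∈ span R s ^ D :=
  one_le.mp (one_le_pow_of_one_le' (one_le.mpr (subset_span hs)) D)

theorem mul_mem_span_pow_succ {s : Set A} {D : ℕ} {x a : A} (hx : x ∈ span R s ^ D) (ha : a ∈ s) :
    x * a ∈ span R s ^ (D + 1) := by
  rw [pow_succ]
  exact mul_mem_mul hx (subset_span ha)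

end Filtration

theorem finrank_span_finset_pow_pos {A : Type*} [CommRing A] [IsDomain A] [CharZero A]
    {s : Finset A} (hs : 1 ∈ s) (D : ℕ) : 0 < finrank ℤ ↥(span ℤ (s : Set A) ^ D) :=
  have : Nontrivial ↥(span ℤ (s : Set A) ^ D) :=
    ⟨⟨1, one_mem_span_pow (s := (s : Set A)) hs D⟩, 0, Subtype.coe_ne_coe.mp one_ne_zero⟩
  finrank_pos

theorem exists_finite_set_many_points_of_mul_mem {K σ ι : Type*} [Field K] [Fintype σ] [Fintype ι]
    {H : Submodule K (σ → K)} (b : Basis ι K H) (L L' : Submodule ℤ K)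
    [Module.Finite ℤ L] [Module.Free ℤ L] [Module.Finite ℤ L'] [Module.Free ℤ L']
    (hmul : ∀ j i, ∀ x ∈ L, x * (b j : σ → K) i ∈ L') :
    ∃ C : ℕ, ∀ R : ℕ, ∃ X : Set K, X.Finite ∧ X.ncard ≤ (2 * (C * R) + 1) ^ finrank ℤ L' ∧
      (2 * R + 1) ^ (Fintype.card ι * finrank ℤ L) ≤ {x | x ∈ H ∧ ∀ i, x i ∈ X}.ncard := by
  classical
  let e := Module.Free.chooseBasis ℤ L
  let e' := Module.Free.chooseBasis ℤ L'
  let E := Pi.basis fun _ : ι => e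
  let g : σ → (ι → L) →ₗ[ℤ] L' := fun i =>
    ∑ j, ((LinearMap.mulRight ℤ ((b j : σ → K) i)).restrict (hmul j i)) ∘ₗ LinearMap.proj j
  have hg : ∀ i x, (g i x : K) = ∑ j, (x j : K) * (b j : σ → K) i := by
    intro i x
    simp only [g, LinearMap.coe_sum, LinearMap.coe_comp, LinearMap.coe_proj, Finset.sum_apply,
      Function.comp_apply, Function.eval, AddSubmonoidClass.coe_finsetSum]
    exact Finset.sum_congr rfl fun j _ => rfl
  choose C hC using fun i => E.exists_mapsTo_box e' (g i)
  refine ⟨∑ i, C i, fun R => ?_⟩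
  set X : Set K := (↑) '' e'.box ((∑ i, C i) * R)
  refine ⟨X, (e'.finite_box _).image _, ?_, ?_⟩
  · rw [Set.ncard_image_of_injective _ Subtype.val_injective, e'.ncard_box,
      finrank_eq_card_chooseBasisIndex]
  let p : (ι → L) → σ → K := fun x => (b.equivFun.symm fun j => (x j : K) : H)
  have hp : p.Injective := fun x y hxy => funext fun j =>
    Subtype.val_injective (congrFun (b.equivFun.symm.injective (Subtype.val_injective hxy)) j)
  have hpi : ∀ x i, p x i = g i x := by
    intro x i
    simp [p, hg, Basis.equivFun_symm_apply]
  have hmaps : MapsTo p (E.box R) {x | x ∈ H ∧ ∀ i, x i ∈ X} :=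
    fun x hx => ⟨Subtype.prop _, fun i => ⟨g i x, e'.box_mono
      (Nat.mul_le_mul_right R (Finset.single_le_sum (fun _ _ => Nat.zero_le _) (Finset.mem_univ i)))
      (hC i R hx), (hpi x i).symm⟩⟩
  have hfin : {x | x ∈ H ∧ ∀ i, x i ∈ X}.Finite :=
    (Set.Finite.pi (t := fun _ : σ => X) fun _ => (e'.finite_box _).image _).subset
      fun x hx i _ => hx.2 i
  calc (2 * R + 1) ^ (Fintype.card ι * finrank ℤ L) = (E.box R).ncard := by
        rw [E.ncard_box, Fintype.card_sigma, Finset.sum_const, finrank_eq_card_chooseBasisIndex]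
        rfl
    _ = (p '' E.box R).ncard := (Set.ncard_image_of_injective _ hp).symm
    _ ≤ _ := Set.ncard_le_ncard hmaps.image_subset hfin

theorem exists_succ_lt_mul_of_le_pow {d : ℕ → ℕ} {t : ℕ} (hd : ∀ D, 0 < d D)
    (hpoly : ∀ D, d D ≤ (D + 1) ^ t) {c : ℝ} (hc : 1 < c) : ∃ D, (d (D + 1) : ℝ) < c * d D := by
  by_contra! hgrow
  have hpow : ∀ D, c ^ D ≤ d D := by
    intro D
    induction D with
    | zero => simpa [Nat.one_le_iff_ne_zero] using (hd 0).ne'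
    | succ D ih =>
      calc c ^ (D + 1) = c * c ^ D := pow_succ' c D
        _ ≤ c * d D := by gcongr
        _ ≤ d (D + 1) := hgrow D
  have hc₀ : 0 < c := zero_lt_one.trans hc
  have hlim : Tendsto (fun D : ℕ => ((D + 1 : ℕ) : ℝ) ^ t / c ^ (D + 1)) atTop (𝓝 0) :=
    (tendsto_pow_const_div_const_pow_of_one_lt t hc).comp (tendsto_add_atTop_nat 1)
  obtain ⟨D, hD⟩ := (hlim.eventually (gt_mem_nhds (inv_pos.mpr hc₀))).exists
  rw [div_lt_iff₀ (by positivity)] at hD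
  have hbound : c ^ (D + 1) ≤ c * ((D + 1 : ℕ) : ℝ) ^ t := by
    rw [pow_succ']
    gcongr
    exact (hpow D).trans (by exact_mod_cast hpoly D)
  have : c⁻¹ * c ^ (D + 1) ≤ ((D + 1 : ℕ) : ℝ) ^ t := (inv_mul_le_iff₀ hc₀).mpr hbound
  linarith

theorem exists_succ_mul_lt_mul_of_le_pow {d : ℕ → ℕ} {t : ℕ} (hd : ∀ D, 0 < d D)
    (hpoly : ∀ D, d D ≤ (D + 1) ^ t) {a b : ℝ} (hb : 0 ≤ b) (hab : a < b) :
    ∃ D, (d (D + 1) : ℝ) * a < d D * b := by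
  rcases le_or_gt a 0 with ha | ha
  · refine ⟨0, ?_⟩
    have h0 : (0 : ℝ) < d 0 := by exact_mod_cast hd 0
    have h1 : (0 : ℝ) < d 1 := by exact_mod_cast hd 1
    rcases ha.lt_or_eq with ha | rfl
    · nlinarith
    · simpa using mul_pos h0 hab
  · obtain ⟨D, hD⟩ := exists_succ_lt_mul_of_le_pow hd hpoly ((one_lt_div ha).mpr hab)
    refine ⟨D, ?_⟩
    calc (d (D + 1) : ℝ) * a < b / a * d D * a := by gcongr
      _ = d D * b := by field_simp

theorem eventually_mul_rpow_le_rpow {c s t : ℝ} (hc : 0 ≤ c) (hst : s < t) :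
    ∀ᶠ x : ℝ in atTop, (c * x) ^ s ≤ x ^ t := by
  filter_upwards [(tendsto_rpow_atTop (sub_pos.mpr hst)).eventually_ge_atTop (c ^ s),
    eventually_gt_atTop 0] with x hcx hx
  calc (c * x) ^ s = c ^ s * x ^ s := Real.mul_rpow hc hx.le
    _ ≤ x ^ (t - s) * x ^ s := by gcongr
    _ = x ^ t := by rw [← Real.rpow_add hx, sub_add_cancel]

theorem exists_rpow_le_of_box_bounds {α : Type*} (count : Set α → ℕ) {m r r' : ℕ} {a : ℝ}
    (hr' : 0 < r') (ha : (r' : ℝ) * a < r * m) (C : ℕ)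
    (hbox : ∀ R : ℕ, ∃ X : Set α, X.Finite ∧ X.ncard ≤ (2 * (C * R) + 1) ^ r' ∧
      (2 * R + 1) ^ (m * r) ≤ count X) (N₀ : ℕ) :
    ∃ N, N₀ ≤ N ∧ ∃ X : Set α, X.Finite ∧ X.ncard ≤ N ∧ (N : ℝ) ^ a ≤ count X := by
  have hodd : Tendsto (fun R : ℕ => 2 * (R : ℝ) + 1) atTop atTop :=
    tendsto_atTop_add_const_right _ 1 (tendsto_natCast_atTop_atTop.const_mul_atTop two_pos)
  obtain ⟨R, hR, hRN₀⟩ := ((hodd.eventually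
    (eventually_mul_rpow_le_rpow (c := C + 1) (by positivity) ha)).and
    (eventually_ge_atTop N₀)).exists
  obtain ⟨X, hXfin, hXcard, hcount⟩ := hbox R
  refine ⟨((C + 1) * (2 * R + 1)) ^ r', ?_, X, hXfin,
    hXcard.trans (Nat.pow_le_pow_left (by nlinarith) _), ?_⟩
  · calc N₀ ≤ R := hRN₀
      _ ≤ (C + 1) * (2 * R + 1) := by nlinarith
      _ ≤ _ := Nat.le_self_pow hr'.ne' _
  · calc ((((C + 1) * (2 * R + 1)) ^ r' : ℕ) : ℝ) ^ a
        = ((C + 1 : ℝ) * (2 * R + 1)) ^ (r' * a) := by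
          rw [Nat.cast_pow, ← Real.rpow_natCast, ← Real.rpow_mul (by positivity)]
          push_cast
          rfl
      _ ≤ (2 * R + 1 : ℝ) ^ (r * m : ℝ) := hR
      _ = ((2 * R + 1) ^ (m * r) : ℕ) := by
          rw [Nat.cast_pow, ← Real.rpow_natCast]
          push_cast
          rw [mul_comm (r : ℝ)]
      _ ≤ count X := by exact_mod_cast hcount

theorem statement7_general (n k : ℕ) (H : Submodule ℂ (Fin n → ℂ))
    (hk : Module.finrank ℂ H = k) :
    ∀ ε : ℝ, 0 < ε → ∀ N₀ : ℕ, ∃ N : ℕ, N₀ ≤ N ∧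
      ∃ X : Fin n → Set ℂ,
        (∀ i, (X i).Finite ∧ (X i).ncard ≤ N) ∧
        (({x : Fin n → ℂ | x ∈ H ∧ ∀ i, x i ∈ X i}).ncard : ℝ)
          ≥ (N : ℝ) ^ ((k : ℝ) - ε) := by
  classical
  intro ε hε N₀
  let b := Module.finBasisOfFinrankEq ℂ H hk
  let G : Finset ℂ := insert 1 (Finset.univ.image fun p : Fin k × Fin n => (b p.1 : Fin n → ℂ) p.2)
  have hG : (1 : ℂ) ∈ G := Finset.mem_insert_self 1 _
  obtain ⟨D, hD⟩ := exists_succ_mul_lt_mul_of_le_pow (finrank_span_finset_pow_pos hG)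
    (finrank_span_finset_pow_le G) k.cast_nonneg (sub_lt_self (k : ℝ) hε)
  obtain ⟨C, hC⟩ := exists_finite_set_many_points_of_mul_mem b
    (span ℤ (G : Set ℂ) ^ D) (span ℤ (G : Set ℂ) ^ (D + 1))
    fun j i x hx => mul_mem_span_pow_succ hx (by simp [G])
  rw [Fintype.card_fin] at hC
  obtain ⟨N, hN₀, X, hX, hXN, hcount⟩ :=
    exists_rpow_le_of_box_bounds (fun X => {x | x ∈ H ∧ ∀ i, x i ∈ X}.ncard)
      (finrank_span_finset_pow_pos hG _) hD C hC N₀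
  exact ⟨N, hN₀, fun _ => X, fun _ => ⟨hX, hXN⟩, hcount⟩

/-- linear subspaces admit no power-saving: if `H ≤ ℂⁿ` is a
`ℂ`-linear subspace of dimension `k`, then for every `ε > 0` and every `N₀` there
are `N ≥ N₀` and finite sets `X₁, …, Xₙ ⊆ ℂ` with `|Xᵢ| ≤ N` such that
`|H ∩ (X₁ × ⋯ × Xₙ)| ≥ N^(k−ε)`. -/
theorem statement7 (n k : ℕ) (hn : 1 ≤ n) (H : Submodule ℂ (Fin n → ℂ))
    (hk : Module.finrank ℂ H = k) :
    ∀ ε : ℝ, 0 < ε → ∀ N₀ : ℕ, ∃ N : ℕ, N₀ ≤ N ∧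
      ∃ X : Fin n → Set ℂ,
        (∀ i, (X i).Finite ∧ (X i).ncard ≤ N) ∧
        (({x : Fin n → ℂ | x ∈ H ∧ ∀ i, x i ∈ X i}).ncard : ℝ)
          ≥ (N : ℝ) ^ ((k : ℝ) - ε) :=
  statement7_general n k H hk
end

section
/- Let 1 ≤ k ≤ n and let M = (M_{ij}) be an n × k integer matrix of rank k. Define φ : (ℂ∖{0})^k → (ℂ∖{0})ⁿ by φ(t)ᵢ := ∏_{j=1}^{k} t_j^{M_{ij}} (integer exponents). Then there exists c > 0, depending only on M, such that for every integer N ≥ 1 there exist finite sets X₁, …, Xₙ ⊆ ℂ∖{0} with |Xᵢ| ≤ N for all i and |{x ∈ X₁ × ⋯ × Xₙ : x lies in the image of φ}| ≥ c·N^{k}. -/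
/-!
Take `tⱼ = 2^{aⱼ}` with `a` running over the integer box `[-r, r]^k`. Then `φ(t)ᵢ = 2^{(M a)ᵢ}`
with `|(M a)ᵢ| ≤ r ∑ⱼ |Mᵢⱼ|`, so every such point lies in the product of the geometric
progressions `Xᵢ = {2^e : |e| ≤ r S}`, `S ≥ maxᵢ ∑ⱼ |Mᵢⱼ|`. Since `M` has full column rank,
`a ↦ M a` is injective, so we get `(2r + 1)^k` distinct points, while `|Xᵢ| ≤ 2rS + 1`.
Taking `r = ⌊N / (2S + 1)⌋` gives `|Xᵢ| ≤ N` and `(2r + 1)^k ≥ (N / (2S + 1))^k`.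
-/

open Finset Function
open scoped Matrix

section Monomial

variable {ι κ G₀ : Type*} [CommGroupWithZero G₀]

theorem Finset.prod_zpow_eq_zpow_sum₀ {a : G₀} (ha : a ≠ 0) (s : Finset ι) (f : ι → ℤ) :
    ∏ i ∈ s, a ^ f i = a ^ ∑ i ∈ s, f i := by
  induction s using Finset.cons_induction with
  | empty => simp
  | cons j s hj ih => rw [prod_cons, sum_cons, ih, zpow_add₀ ha]

theorem prod_zpow_zpow_eq_zpow_mulVec [Fintype ι] {a : G₀} (ha : a ≠ 0) (M : Matrix κ ι ℤ)
    (v : ι → ℤ) (i : κ) : ∏ j, (a ^ v j) ^ M i j = a ^ (M *ᵥ v) i := by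
  rw [Matrix.mulVec, dotProduct, ← prod_zpow_eq_zpow_sum₀ ha]
  exact prod_congr rfl fun j _ ↦ by rw [← zpow_mul, mul_comm]

end Monomial

theorem zpow_right_injective_of_norm_ne_one {𝕜 : Type*} [NormedDivisionRing 𝕜] {z : 𝕜}
    (h₀ : z ≠ 0) (h₁ : ‖z‖ ≠ 1) : Injective fun e : ℤ ↦ z ^ e := fun e f h ↦
  zpow_right_injective₀ (norm_pos_iff.2 h₀) h₁ (by simpa only [norm_zpow] using congrArg norm h)

namespace Matrix

variable {ι κ : Type*} [Fintype ι]

theorem mulVec_injective_of_rank_eq_card {K : Type*} [Field K] {A : Matrix κ ι K}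
    (h : A.rank = Fintype.card ι) : Injective A.mulVec := by
  rw [mulVec_injective_iff, linearIndependent_iff_card_eq_finrank_span, ← h,
    rank_eq_finrank_span_cols, Set.finrank]

theorem mulVec_injective_of_rank_map_intCast_eq_card {K : Type*} [Field K] [CharZero K]
    {M : Matrix κ ι ℤ} (h : (M.map (Int.cast : ℤ → K)).rank = Fintype.card ι) :
    Injective M.mulVec := by
  intro v w hvw
  have hK : M.map (Int.castRingHom K) *ᵥ (Int.castRingHom K ∘ v) =
      M.map (Int.castRingHom K) *ᵥ (Int.castRingHom K ∘ w) := by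
    funext i
    simp only [← RingHom.map_mulVec, hvw]
  funext j
  simpa using congrFun (mulVec_injective_of_rank_eq_card h hK) j

theorem abs_mulVec_le {R : Type*} [CommRing R] [LinearOrder R] [IsStrictOrderedRing R]
    (M : Matrix κ ι R) {v : ι → R} {r : R} (hv : ∀ j, |v j| ≤ r) (i : κ) :
    |(M *ᵥ v) i| ≤ r * ∑ j, |M i j| := by
  rw [mul_sum]
  refine (abs_sum_le_sum_abs _ _).trans (sum_le_sum fun j _ ↦ ?_)
  rw [abs_mul, mul_comm]
  exact mul_le_mul_of_nonneg_right (hv j) (abs_nonneg _)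

end Matrix

section GeometricProgression

variable {K : Type*} [Field K] [DecidableEq K]

noncomputable def geomProgression (a : K) (R : ℕ) : Finset K :=
  (Icc (-R : ℤ) R).image (a ^ ·)

theorem card_geomProgression_le (a : K) (R : ℕ) : #(geomProgression a R) ≤ 2 * R + 1 :=
  card_image_le.trans (by simp only [Int.card_Icc]; omega)

theorem ne_zero_of_mem_geomProgression {a z : K} {R : ℕ} (ha : a ≠ 0)
    (hz : z ∈ geomProgression a R) : z ≠ 0 := by
  obtain ⟨e, -, rfl⟩ := mem_image.1 hz
  exact zpow_ne_zero e ha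

end GeometricProgression

theorem card_piFinset_Icc_neg (ι : Type*) [Fintype ι] [DecidableEq ι] (r : ℕ) :
    #(Fintype.piFinset fun _ : ι ↦ Icc (-r : ℤ) r) = (2 * r + 1) ^ Fintype.card ι := by
  simp only [Fintype.card_piFinset, Int.card_Icc, prod_const, card_univ]
  congr 1
  omega

def boxPointsOnMonomialImage {ι κ : Type*} [Fintype ι] (X : κ → Set ℂ) (M : Matrix κ ι ℤ) :
    Set (κ → ℂ) :=
  {x | (∀ i, x i ∈ X i) ∧ ∃ t : ι → ℂ, (∀ j, t j ≠ 0) ∧ ∀ i, x i = ∏ j, t j ^ M i j}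

theorem le_ncard_boxPointsOnMonomialImage_geomProgression {ι κ : Type*} [Fintype ι]
    [DecidableEq ι] [Finite κ] {M : Matrix κ ι ℤ} (hM : Injective M.mulVec) {r R : ℕ}
    (hR : ∀ i, (r : ℤ) * ∑ j, |M i j| ≤ R) :
    (2 * r + 1) ^ Fintype.card ι ≤
      (boxPointsOnMonomialImage (fun _ ↦ geomProgression (2 : ℂ) R) M).ncard := by
  set S := boxPointsOnMonomialImage (fun _ ↦ geomProgression (2 : ℂ) R) M
  set box := Fintype.piFinset fun _ : ι ↦ Icc (-r : ℤ) r
  set f : (ι → ℤ) → κ → ℂ := fun v i ↦ (2 : ℂ) ^ (M *ᵥ v) i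
  have hf : Injective f := fun v w h ↦ hM <| funext fun i ↦
    zpow_right_injective_of_norm_ne_one two_ne_zero (by norm_num) (congrFun h i)
  have hmaps : ∀ v ∈ box, f v ∈ S := by
    intro v hv
    have hv_abs : ∀ j, |v j| ≤ r := fun j ↦ abs_le.2 (mem_Icc.1 (Fintype.mem_piFinset.1 hv j))
    refine ⟨fun i ↦ mem_image.2 ⟨(M *ᵥ v) i, ?_, rfl⟩, fun j ↦ 2 ^ v j,
      fun j ↦ zpow_ne_zero _ two_ne_zero,
      fun i ↦ (prod_zpow_zpow_eq_zpow_mulVec two_ne_zero M v i).symm⟩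
    exact mem_Icc.2 (abs_le.1 ((M.abs_mulVec_le hv_abs i).trans (hR i)))
  have hfin : S.Finite :=
    (Set.Finite.pi fun _ ↦ finite_toSet _).subset fun x hx i _ ↦ hx.1 i
  calc (2 * r + 1) ^ Fintype.card ι = (box : Set (ι → ℤ)).ncard := by
        rw [Set.ncard_coe_finset, card_piFinset_Icc_neg]
    _ = (f '' box).ncard := (Set.ncard_image_of_injective _ hf).symm
    _ ≤ _ := Set.ncard_le_ncard (t := S) (Set.image_subset_iff.2 hmaps) hfin

theorem Nat.cast_div_le_div_add_one {K : Type*} [Semifield K] [LinearOrder K]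
    [IsStrictOrderedRing K] [FloorSemiring K] (m n : ℕ) : (m : K) / n ≤ (m / n : ℕ) + 1 := by
  rw [← Nat.floor_div_eq_div (K := K)]
  exact (Nat.lt_floor_add_one _).le

theorem two_mul_div_mul_add_one_le {N : ℕ} (S : ℕ) (hN : 1 ≤ N) :
    2 * (N / (2 * S + 1)) * S + 1 ≤ N := by
  rcases (N / (2 * S + 1)).eq_zero_or_pos with h | h
  · simpa [h] using hN
  · nlinarith [Nat.div_mul_le_self N (2 * S + 1)]

theorem statement8_general (n k : ℕ)
    (M : Matrix (Fin n) (Fin k) ℤ)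
    (hrank : (M.map (Int.cast : ℤ → ℚ)).rank = k) :
    ∃ c : ℝ, 0 < c ∧ ∀ N : ℕ, 1 ≤ N →
      ∃ X : Fin n → Set ℂ,
        (∀ i, (X i).Finite ∧ (X i).ncard ≤ N ∧ ∀ z ∈ X i, z ≠ 0) ∧
        (({x : Fin n → ℂ | (∀ i, x i ∈ X i) ∧
            ∃ t : Fin k → ℂ, (∀ j, t j ≠ 0) ∧ ∀ i, x i = ∏ j, t j ^ (M i j)}).ncard : ℝ)
          ≥ c * (N : ℝ) ^ k := by
  obtain ⟨S, hS⟩ : ∃ S : ℕ, ∀ i, ∑ j, |M i j| ≤ S :=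
    let ⟨b, hb⟩ := Finite.exists_le fun i ↦ ∑ j, |M i j|
    ⟨b.toNat, fun i ↦ (hb i).trans (Int.self_le_toNat b)⟩
  have hM : Injective M.mulVec :=
    Matrix.mulVec_injective_of_rank_map_intCast_eq_card (K := ℚ) (by simpa using hrank)
  refine ⟨(1 / (2 * S + 1 : ℝ)) ^ k, by positivity, fun N hN ↦ ?_⟩
  have hwidth := two_mul_div_mul_add_one_le S hN
  have hq := Nat.cast_div_le_div_add_one (K := ℝ) N (2 * S + 1)
  set q := N / (2 * S + 1)
  refine ⟨fun _ ↦ geomProgression (2 : ℂ) (q * S), fun _ ↦ ⟨finite_toSet _, ?_,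
    fun _ ↦ ne_zero_of_mem_geomProgression two_ne_zero⟩, ?_⟩
  · rw [Set.ncard_coe_finset]
    linarith [card_geomProgression_le (2 : ℂ) (q * S)]
  have hcount := le_ncard_boxPointsOnMonomialImage_geomProgression hM (r := q) (R := q * S)
    fun i ↦ by push_cast; exact mul_le_mul_of_nonneg_left (hS i) (by positivity)
  rw [Fintype.card_fin] at hcount
  calc (1 / (2 * S + 1 : ℝ)) ^ k * (N : ℝ) ^ k = ((N : ℝ) / (2 * S + 1)) ^ k := by
        rw [← mul_pow, one_div_mul_eq_div]
    _ ≤ (2 * q + 1 : ℝ) ^ k := by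
        gcongr
        push_cast at hq
        linarith [q.cast_nonneg (α := ℝ)]
    _ ≤ _ := by exact_mod_cast hcount

/-- subtori admit no power-saving: let `M` be an `n × k` integer
matrix of rank `k` and let `φ : (ℂ∖{0})^k → (ℂ∖{0})ⁿ`, `φ(t)ᵢ = ∏ⱼ tⱼ^(M i j)`.
Then there is `c > 0` such that for every `N ≥ 1` there are finite sets
`X₁, …, Xₙ ⊆ ℂ∖{0}` with `|Xᵢ| ≤ N` and at least `c·N^k` points of `X₁ × ⋯ × Xₙ`
lying in the image of `φ`. -/
theorem statement8 (n k : ℕ) (hk : 1 ≤ k) (hkn : k ≤ n)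
    (M : Matrix (Fin n) (Fin k) ℤ)
    (hrank : (M.map (Int.cast : ℤ → ℚ)).rank = k) :
    ∃ c : ℝ, 0 < c ∧ ∀ N : ℕ, 1 ≤ N →
      ∃ X : Fin n → Set ℂ,
        (∀ i, (X i).Finite ∧ (X i).ncard ≤ N ∧ ∀ z ∈ X i, z ≠ 0) ∧
        (({x : Fin n → ℂ | (∀ i, x i ∈ X i) ∧
            ∃ t : Fin k → ℂ, (∀ j, t j ≠ 0) ∧ ∀ i, x i = ∏ j, t j ^ (M i j)}).ncard : ℝ)
          ≥ c * (N : ℝ) ^ k :=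
  statement8_general n k M hrank
end

section
/- If a ring O admits a constrained filtration, then the polynomial ring O[X] admits a constrained filtration. -/
/-- A constrained filtration of a ring `O`: an increasing chain `(Oₙ)` of finite
nonempty subsets such that (CF0) `⋃ₙ Oₙ = O`; (CF1) there is `k` with
`Oₙ + Oₙ ⊆ O_{n+k}` for all `n`; (CF2) for every `a ∈ O` there is `k` with
`a·Oₙ ⊆ O_{n+k}` for all `n`; (CF3) for every `ε > 0` there is `C_ε > 0` with
`|O_{n+1}| ≤ C_ε·|Oₙ|^(1+ε)` for all `n`. -/
def IsConstrainedFiltration (O : Type*) [Ring O] (F : ℕ → Set O) : Prop :=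
  (∀ n, (F n).Finite ∧ (F n).Nonempty) ∧
  (∀ n, F n ⊆ F (n + 1)) ∧
  (∀ x : O, ∃ n, x ∈ F n) ∧
  (∃ k : ℕ, ∀ n, ∀ x ∈ F n, ∀ y ∈ F n, x + y ∈ F (n + k)) ∧
  (∀ a : O, ∃ k : ℕ, ∀ n, ∀ x ∈ F n, a * x ∈ F (n + k)) ∧
  (∀ ε : ℝ, 0 < ε → ∃ C : ℝ, 0 < C ∧
    ∀ n, ((F (n + 1)).ncard : ℝ) ≤ C * ((F n).ncard : ℝ) ^ ((1 : ℝ) + ε))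

/-- A ring is constrainedly filtered if it admits a constrained filtration. -/
def ConstrainedlyFiltered (O : Type*) [Ring O] : Prop :=
  ∃ F : ℕ → Set O, IsConstrainedFiltration O F

/-!
Shift a constrained filtration `(F n)` of `O` so that `0 ∈ F 0`, and let `G n` consist of the
polynomials of degree `< n` whose coefficient of `X ^ i` lies in `F (n - 1 - i)`. Every element of
`G (n + 1)` is uniquely `a + X * q` with `a ∈ F n` and `q ∈ G n`, so `|G n| = ∏_{m < n} |F m|`.
Addition and multiplication by `C a` and by `X` act coefficientwise with bounded index shifts, and
every polynomial is built from constants by these operations, which gives (CF0)–(CF2) for `G`.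

Condition (CF3) for `G` asks for `|F n| ≤ C (∏_{m < n} |F m|) ^ ε`. With `b n = log |F n|`, (CF3)
for `F` iterates to `b (n + j) ≤ c_j + 2 b n` for each fixed `j`; adding these inequalities over
the `J` terms preceding `n` gives `J b n ≤ c + 2 ∑_{m < n} b m`, and any `J > 2 / ε` will do.
-/

open Finset Real Polynomial

section RealSequence

variable {b : ℕ → ℝ}

theorem exists_le_add_mul_of_forall_succ_le (hb : ∀ n, 0 ≤ b n)
    (h : ∀ η > 0, ∃ c, ∀ n, b (n + 1) ≤ c + (1 + η) * b n) (j : ℕ) :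
    ∀ η > 0, ∃ c, ∀ n, b (n + j) ≤ c + (1 + η) * b n := by
  induction j with
  | zero => exact fun η hη => ⟨0, fun n => by rw [add_zero, zero_add]; nlinarith [hb n]⟩
  | succ j ih =>
    intro η hη
    obtain ⟨c₁, h₁⟩ := h (η / 2) (by positivity)
    obtain ⟨c₂, h₂⟩ := ih (η / (2 + η)) (by positivity)
    have hsplit : (1 + η / 2) * (1 + η / (2 + η)) = 1 + η := by field_simp; ring
    refine ⟨c₁ + (1 + η / 2) * c₂, fun n => ?_⟩
    calc b (n + (j + 1)) = b (n + j + 1) := by rw [add_assoc]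
      _ ≤ c₁ + (1 + η / 2) * b (n + j) := h₁ _
      _ ≤ c₁ + (1 + η / 2) * (c₂ + (1 + η / (2 + η)) * b n) := by gcongr; exact h₂ n
      _ = c₁ + (1 + η / 2) * c₂ + (1 + η) * b n := by rw [← hsplit]; ring

theorem exists_le_add_mul_sum_range (hb : ∀ n, 0 ≤ b n)
    (h : ∀ η > 0, ∃ c, ∀ n, b (n + 1) ≤ c + (1 + η) * b n) {ε : ℝ} (hε : 0 < ε) :
    ∃ c, ∀ n, b n ≤ c + ε * ∑ m ∈ range n, b m := by
  obtain ⟨J, hJ⟩ := exists_nat_gt (2 / ε)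
  have hJpos : (0 : ℝ) < J := lt_trans (by positivity) hJ
  have hJε : 2 / (J : ℝ) < ε := by
    rw [div_lt_iff₀ hJpos]; rw [div_lt_iff₀ hε] at hJ; linarith
  choose c hc using fun j => exists_le_add_mul_of_forall_succ_le hb h j 1 one_pos
  set A := ∑ k ∈ range J, c (J - k)
  refine ⟨max (A / J) (∑ m ∈ range J, b m), fun n => ?_⟩
  set S := ∑ m ∈ range n, b m
  have hS : 0 ≤ S := sum_nonneg fun m _ => hb m
  rcases lt_or_ge n J with hn | hn
  · have : b n ≤ ∑ m ∈ range J, b m := single_le_sum (fun m _ => hb m) (mem_range.2 hn)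
    linarith [le_max_right (A / J) (∑ m ∈ range J, b m), mul_nonneg hε.le hS]
  · have hterm : ∀ k ∈ range J, b n ≤ c (J - k) + 2 * b (n - J + k) := by
      intro k hk
      have := hc (J - k) (n - J + k)
      rw [show n - J + k + (J - k) = n by have := mem_range.1 hk; omega] at this
      linarith
    have hwindow : ∑ k ∈ range J, b (n - J + k) ≤ S := by
      have hIco := sum_Ico_eq_sum_range b (n - J) n
      rw [show n - (n - J) = J by omega] at hIco
      rw [← hIco]
      refine sum_le_sum_of_subset_of_nonneg (fun m hm => ?_) fun m _ _ => hb m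
      simp only [mem_Ico, mem_range] at hm ⊢
      omega
    have hJb : J * b n ≤ A + 2 * S :=
      calc (J : ℝ) * b n = ∑ k ∈ range J, b n := by simp
        _ ≤ ∑ k ∈ range J, (c (J - k) + 2 * b (n - J + k)) := sum_le_sum hterm
        _ = A + 2 * ∑ k ∈ range J, b (n - J + k) := by rw [sum_add_distrib, mul_sum]
        _ ≤ A + 2 * S := by linarith
    calc b n ≤ A / J + 2 / J * S := by
          rw [div_mul_eq_mul_div, ← add_div, le_div_iff₀ hJpos]; linarith
      _ ≤ max (A / J) (∑ m ∈ range J, b m) + ε * S := by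
          gcongr
          exact le_max_left _ _

end RealSequence

theorem le_mul_rpow_iff_log_le {x y C p : ℝ} (hx : 0 < x) (hy : 0 < y) (hC : 0 < C) :
    x ≤ C * y ^ p ↔ log x ≤ log C + p * log y := by
  rw [← log_le_log_iff hx (by positivity), log_mul hC.ne' (by positivity), log_rpow hy]

theorem exists_mul_prod_range_le_mul_rpow {a : ℕ → ℝ} (ha : ∀ n, 1 ≤ a n)
    (h : ∀ η : ℝ, 0 < η → ∃ C : ℝ, 0 < C ∧ ∀ n, a (n + 1) ≤ C * a n ^ ((1 : ℝ) + η))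
    {ε : ℝ} (hε : 0 < ε) :
    ∃ C : ℝ, 0 < C ∧
      ∀ n, a n * ∏ m ∈ range n, a m ≤ C * (∏ m ∈ range n, a m) ^ ((1 : ℝ) + ε) := by
  have hpos n : 0 < a n := one_pos.trans_le (ha n)
  obtain ⟨c, hc⟩ := exists_le_add_mul_sum_range (b := fun n => log (a n))
    (fun n => log_nonneg (ha n)) (fun η hη => by
      obtain ⟨C, hC, hCa⟩ := h η hη
      exact ⟨log C, fun n => (le_mul_rpow_iff_log_le (hpos _) (hpos n) hC).1 (hCa n)⟩) hε
  refine ⟨exp c, exp_pos c, fun n => ?_⟩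
  have hprod : 0 < ∏ m ∈ range n, a m := prod_pos fun m _ => hpos m
  rw [le_mul_rpow_iff_log_le (mul_pos (hpos n) hprod) hprod (exp_pos c), log_mul (hpos n).ne'
    hprod.ne', log_exp, log_prod fun m _ => (hpos m).ne']
  linarith [hc n]

namespace Polynomial

variable {R : Type*} [Ring R] {F : ℕ → Set R}

-- For `i ≥ n` the index `n - (i + 1)` truncates to `0`: those coefficients vanish, which is why
-- most lemmas below assume `0 ∈ F 0`.
def coeffFiltration (F : ℕ → Set R) (n : ℕ) : Set R[X] :=
  {p | p.degree < n ∧ ∀ i, p.coeff i ∈ F (n - (i + 1))}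

theorem coeff_eq_zero_of_mem_coeffFiltration {n i : ℕ} {p : R[X]}
    (hp : p ∈ coeffFiltration F n) (hi : n ≤ i) : p.coeff i = 0 :=
  (degree_lt_iff_coeff_zero p n).1 hp.1 i hi

theorem coeffFiltration_mono (hF : Monotone F) : Monotone (coeffFiltration F) :=
  fun _ _ hmn _ hp =>
    ⟨hp.1.trans_le (by exact_mod_cast hmn), fun i => hF (Nat.sub_le_sub_right hmn _) (hp.2 i)⟩

theorem coeffFiltration_zero (h0 : 0 ∈ F 0) : coeffFiltration F 0 = {0} := by
  refine Set.eq_singleton_iff_unique_mem.2 ⟨⟨by simp, fun i => by simpa using h0⟩, fun p hp => ?_⟩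
  ext i
  exact coeff_eq_zero_of_mem_coeffFiltration hp i.zero_le

theorem C_add_X_mul_mem_coeffFiltration_succ {n : ℕ} {a : R} {q : R[X]} (ha : a ∈ F n)
    (hq : q ∈ coeffFiltration F n) : C a + X * q ∈ coeffFiltration F (n + 1) := by
  refine ⟨(degree_lt_iff_coeff_zero _ _).2 fun m hm => ?_, fun i => ?_⟩
  · obtain ⟨i, rfl⟩ : ∃ i, m = i + 1 := ⟨m - 1, by omega⟩
    simp [coeff_X_mul, coeff_eq_zero_of_mem_coeffFiltration hq (by omega : n ≤ i)]
  · cases i with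
    | zero => simpa using ha
    | succ i => simpa [coeff_C, coeff_X_mul] using hq.2 i

theorem coeffFiltration_succ (n : ℕ) :
    coeffFiltration F (n + 1) =
      (fun x : R × R[X] => C x.1 + X * x.2) '' (F n ×ˢ coeffFiltration F n) := by
  refine Set.Subset.antisymm (fun p hp => ⟨(p.coeff 0, p.divX), ⟨?_, ?_, fun i => ?_⟩, ?_⟩) ?_
  · simpa using hp.2 0
  · exact (degree_lt_iff_coeff_zero _ _).2 fun m hm => by
      simpa using coeff_eq_zero_of_mem_coeffFiltration hp (by omega : n + 1 ≤ m + 1)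
  · simpa [Nat.succ_sub_succ] using hp.2 (i + 1)
  · simp [add_comm]
  · rintro _ ⟨⟨a, q⟩, ⟨ha, hq⟩, rfl⟩
    exact C_add_X_mul_mem_coeffFiltration_succ ha hq

theorem injective_C_add_X_mul : Function.Injective fun x : R × R[X] => C x.1 + X * x.2 := by
  refine Function.LeftInverse.injective (g := fun p => (p.coeff 0, p.divX)) fun x => ?_
  ext <;> simp [coeff_C]

theorem coeffFiltration_finite (hfin : ∀ n, (F n).Finite) (h0 : 0 ∈ F 0) (n : ℕ) :
    (coeffFiltration F n).Finite := by
  induction n with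
  | zero => simp [coeffFiltration_zero h0]
  | succ n ih => rw [coeffFiltration_succ]; exact ((hfin n).prod ih).image _

theorem ncard_coeffFiltration (h0 : 0 ∈ F 0) (n : ℕ) :
    (coeffFiltration F n).ncard = ∏ m ∈ range n, (F m).ncard := by
  induction n with
  | zero => simp [coeffFiltration_zero h0]
  | succ n ih =>
    rw [coeffFiltration_succ, Set.ncard_image_of_injective _ injective_C_add_X_mul,
      Set.ncard_prod, ih, prod_range_succ, mul_comm]

theorem add_mem_coeffFiltration (hF : Monotone F) (h0 : 0 ∈ F 0) {k : ℕ}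
    (hadd : ∀ n, ∀ x ∈ F n, ∀ y ∈ F n, x + y ∈ F (n + k)) {n : ℕ} {p q : R[X]}
    (hp : p ∈ coeffFiltration F n) (hq : q ∈ coeffFiltration F n) :
    p + q ∈ coeffFiltration F (n + k) := by
  refine ⟨(degree_lt_iff_coeff_zero _ _).2 fun i hi => ?_, fun i => ?_⟩
  · simp [coeff_eq_zero_of_mem_coeffFiltration hp (by omega : n ≤ i),
      coeff_eq_zero_of_mem_coeffFiltration hq (by omega : n ≤ i)]
  · rcases lt_or_ge i n with hi | hi
    · rw [coeff_add]
      exact hF (show n - (i + 1) + k ≤ n + k - (i + 1) by omega) (hadd _ _ (hp.2 i) _ (hq.2 i))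
    · simpa [coeff_eq_zero_of_mem_coeffFiltration hp hi,
        coeff_eq_zero_of_mem_coeffFiltration hq hi] using hF (Nat.zero_le _) h0

theorem C_mul_mem_coeffFiltration (hF : Monotone F) (h0 : 0 ∈ F 0) {b : R} {k : ℕ}
    (hb : ∀ n, ∀ x ∈ F n, b * x ∈ F (n + k)) {n : ℕ} {p : R[X]}
    (hp : p ∈ coeffFiltration F n) : C b * p ∈ coeffFiltration F (n + k) := by
  refine ⟨(degree_lt_iff_coeff_zero _ _).2 fun i hi => ?_, fun i => ?_⟩
  · simp [coeff_eq_zero_of_mem_coeffFiltration hp (by omega : n ≤ i)]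
  · rcases lt_or_ge i n with hi | hi
    · rw [coeff_C_mul]
      exact hF (show n - (i + 1) + k ≤ n + k - (i + 1) by omega) (hb _ _ (hp.2 i))
    · simpa [coeff_eq_zero_of_mem_coeffFiltration hp hi] using hF (Nat.zero_le _) h0

theorem zero_mem_coeffFiltration (hF : Monotone F) (h0 : 0 ∈ F 0) (n : ℕ) :
    0 ∈ coeffFiltration F n :=
  coeffFiltration_mono hF n.zero_le (by simp [coeffFiltration_zero h0])

theorem X_mul_mem_coeffFiltration (hF : Monotone F) (h0 : 0 ∈ F 0) {n : ℕ} {p : R[X]}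
    (hp : p ∈ coeffFiltration F n) : X * p ∈ coeffFiltration F (n + 1) := by
  simpa using C_add_X_mul_mem_coeffFiltration_succ (hF n.zero_le h0) hp

theorem C_mem_coeffFiltration (hF : Monotone F) (h0 : 0 ∈ F 0) {n : ℕ} {a : R}
    (ha : a ∈ F n) : C a ∈ coeffFiltration F (n + 1) := by
  simpa using C_add_X_mul_mem_coeffFiltration_succ ha (zero_mem_coeffFiltration hF h0 n)

theorem exists_mem_coeffFiltration (hF : Monotone F) (h0 : 0 ∈ F 0)
    (hcover : ∀ x, ∃ n, x ∈ F n) {k : ℕ} (hadd : ∀ n, ∀ x ∈ F n, ∀ y ∈ F n, x + y ∈ F (n + k))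
    (p : R[X]) : ∃ n, p ∈ coeffFiltration F n := by
  induction p using Polynomial.induction_on with
  | C a =>
    obtain ⟨n, hn⟩ := hcover a
    exact ⟨n + 1, C_mem_coeffFiltration hF h0 hn⟩
  | add p q hp hq =>
    obtain ⟨m, hm⟩ := hp
    obtain ⟨n, hn⟩ := hq
    exact ⟨max m n + k, add_mem_coeffFiltration hF h0 hadd
      (coeffFiltration_mono hF (le_max_left m n) hm)
      (coeffFiltration_mono hF (le_max_right m n) hn)⟩
  | monomial n a ih =>
    obtain ⟨m, hm⟩ := ih
    refine ⟨m + 1, ?_⟩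
    rw [pow_succ, ← mul_assoc, ← X_mul]
    exact X_mul_mem_coeffFiltration hF h0 hm

theorem exists_forall_mul_mem_coeffFiltration (hF : Monotone F) (h0 : 0 ∈ F 0) {k : ℕ}
    (hadd : ∀ n, ∀ x ∈ F n, ∀ y ∈ F n, x + y ∈ F (n + k))
    (hmul : ∀ a : R, ∃ k, ∀ n, ∀ x ∈ F n, a * x ∈ F (n + k)) (a : R[X]) :
    ∃ l, ∀ n, ∀ p ∈ coeffFiltration F n, a * p ∈ coeffFiltration F (n + l) := by
  induction a using Polynomial.induction_on with
  | C a =>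
    obtain ⟨l, hl⟩ := hmul a
    exact ⟨l, fun n p hp => C_mul_mem_coeffFiltration hF h0 hl hp⟩
  | add a b ha hb =>
    obtain ⟨l, hl⟩ := ha
    obtain ⟨m, hm⟩ := hb
    refine ⟨max l m + k, fun n p hp => ?_⟩
    rw [add_mul, ← add_assoc]
    exact add_mem_coeffFiltration hF h0 hadd
      (coeffFiltration_mono hF (by omega) (hl n p hp))
      (coeffFiltration_mono hF (by omega) (hm n p hp))
  | monomial j a ih =>
    obtain ⟨l, hl⟩ := ih
    refine ⟨l + 1, fun n p hp => ?_⟩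
    rw [pow_succ, ← mul_assoc, mul_assoc, ← add_assoc, add_right_comm]
    exact hl _ _ (X_mul_mem_coeffFiltration hF h0 hp)

end Polynomial

namespace IsConstrainedFiltration

variable {R : Type*} [Ring R] {F : ℕ → Set R}

theorem monotone (hF : IsConstrainedFiltration R F) : Monotone F :=
  monotone_nat_of_le_succ hF.2.1

theorem comp_add_right (hF : IsConstrainedFiltration R F) (N : ℕ) :
    IsConstrainedFiltration R fun n => F (n + N) := by
  obtain ⟨hfin, hsucc, hcover, ⟨k, hadd⟩, hmul, hgrowth⟩ := hF
  refine ⟨fun n => hfin _, fun n => ?_, fun x => ?_, ⟨k, fun n x hx y hy => ?_⟩,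
    fun a => ?_, fun ε hε => ?_⟩
  · simpa [Nat.add_right_comm] using hsucc (n + N)
  · obtain ⟨n, hn⟩ := hcover x
    exact ⟨n, monotone_nat_of_le_succ hsucc (n.le_add_right N) hn⟩
  · simpa [Nat.add_right_comm] using hadd _ x hx y hy
  · obtain ⟨k, hk⟩ := hmul a
    exact ⟨k, fun n x hx => by simpa [Nat.add_right_comm] using hk _ x hx⟩
  · obtain ⟨C, hC, hCF⟩ := hgrowth ε hε
    exact ⟨C, hC, fun n => by simpa [Nat.add_right_comm] using hCF (n + N)⟩

theorem coeffFiltration (hF : IsConstrainedFiltration R F) (h0 : 0 ∈ F 0) :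
    IsConstrainedFiltration R[X] (Polynomial.coeffFiltration F) := by
  have hmono := hF.monotone
  obtain ⟨hfin, -, hcover, ⟨k, hadd⟩, hmul, hgrowth⟩ := hF
  have hcard n : (1 : ℝ) ≤ (F n).ncard :=
    Nat.one_le_cast.2 ((Set.ncard_pos (hfin n).1).2 (hfin n).2)
  refine ⟨fun n => ⟨coeffFiltration_finite (fun m => (hfin m).1) h0 n,
      0, zero_mem_coeffFiltration hmono h0 n⟩,
    fun n => coeffFiltration_mono hmono n.le_succ,
    exists_mem_coeffFiltration hmono h0 hcover hadd,
    ⟨k, fun n _ hp _ hq => add_mem_coeffFiltration hmono h0 hadd hp hq⟩,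
    exists_forall_mul_mem_coeffFiltration hmono h0 hadd hmul, fun ε hε => ?_⟩
  obtain ⟨C, hC, hCG⟩ := exists_mul_prod_range_le_mul_rpow hcard hgrowth hε
  refine ⟨C, hC, fun n => ?_⟩
  simpa [ncard_coeffFiltration h0, prod_range_succ, mul_comm] using hCG n

end IsConstrainedFiltration

/-- if a ring `O` admits a constrained filtration, then so does the
polynomial ring `O[X]`. -/
theorem statement9 (O : Type*) [Ring O] (h : ConstrainedlyFiltered O) :
    ConstrainedlyFiltered (Polynomial O) := by
  obtain ⟨F, hF⟩ := h
  obtain ⟨N, hN⟩ := hF.2.2.1 0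
  exact ⟨_, (hF.comp_add_right N).coeffFiltration (by simpa using hN)⟩
end

section
/- Let O be an integral domain admitting a constrained filtration and let a ∈ O with a ≠ 0. Then the subring O[a⁻¹] of the fraction field of O generated by O together with the inverse a⁻¹ admits a constrained filtration. -/
/-!
`O[a⁻¹]` is the localization of `O` away from `a`, and localizing rescales the filtration:
if `a · Fₙ ⊆ F_{n+k}`, take `Gₙ = {x / aⁿ : x ∈ F_{(k+1)n}}`. Since `x / aⁿ = aʲx / aⁿ⁺ʲ` and
`aʲ · F_{(k+1)n+j} ⊆ F_{(k+1)(n+j)}`, every `x / aⁿ` with `x ∈ F_{(k+1)n+j}` lies in `G_{n+j}`;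
this gives exhaustion, (CF1) and (CF2). As `a` is a nonzerodivisor, `|Gₙ| = |F_{(k+1)n}|`, so
(CF3) for `G` is (CF3) for `F` iterated `k + 1` times, and steps of exponent `1 + δ` compose
to exponent `(1 + δ)²`.
-/

open IsLocalization.Away

-- (CF3) says `AlmostLinearStep (fun n => ((F n).ncard : ℝ)) 1`.
def AlmostLinearStep (c : ℕ → ℝ) (k : ℕ) : Prop :=
  ∀ ε : ℝ, 0 < ε → ∃ C : ℝ, 0 < C ∧ ∀ n, c (n + k) ≤ C * c n ^ ((1 : ℝ) + ε)

namespace AlmostLinearStep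

variable {c : ℕ → ℝ}

theorem add (hc : ∀ n, 0 ≤ c n) {k l : ℕ} (hk : AlmostLinearStep c k)
    (hl : AlmostLinearStep c l) : AlmostLinearStep c (k + l) := by
  intro ε hε
  set δ := Real.sqrt (1 + ε) - 1
  have hδ : 0 < δ := sub_pos.mpr (Real.lt_sqrt zero_le_one |>.mpr (by linarith))
  have hδε : (1 + δ) * (1 + δ) = 1 + ε := by
    simp only [δ, add_sub_cancel]; exact Real.mul_self_sqrt (by linarith)
  obtain ⟨Ck, hCk, hk⟩ := hk δ hδ
  obtain ⟨Cl, hCl, hl⟩ := hl δ hδ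
  refine ⟨Cl * Ck ^ (1 + δ), by positivity, fun n => ?_⟩
  calc c (n + (k + l)) = c (n + k + l) := by rw [add_assoc]
    _ ≤ Cl * c (n + k) ^ (1 + δ) := hl (n + k)
    _ ≤ Cl * (Ck * c n ^ (1 + δ)) ^ (1 + δ) := by gcongr; exacts [hc _, hk n]
    _ = Cl * Ck ^ (1 + δ) * c n ^ (1 + ε) := by
      rw [Real.mul_rpow hCk.le (by positivity [hc n]), ← Real.rpow_mul (hc n), hδε, mul_assoc]

theorem of_one (hc : ∀ n, 0 ≤ c n) (h : AlmostLinearStep c 1) :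
    ∀ k : ℕ, AlmostLinearStep c (k + 1)
  | 0 => h
  | k + 1 => (of_one hc h k).add hc h

end AlmostLinearStep

theorem pow_mul_mem_of_mul_mem {O : Type*} [Monoid O] {F : ℕ → Set O} {a : O} {k : ℕ}
    (hk : ∀ n, ∀ x ∈ F n, a * x ∈ F (n + k)) (m : ℕ) {n : ℕ} {x : O} (hx : x ∈ F n) :
    a ^ m * x ∈ F (n + m * k) := by
  induction m with
  | zero => simpa using hx
  | succ m ih =>
    rw [pow_succ', mul_assoc, Nat.succ_mul, ← add_assoc]
    exact hk _ _ ih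

theorem IsConstrainedFiltration.monotone_s10 {O : Type*} [Ring O] {F : ℕ → Set O}
    (hF : IsConstrainedFiltration O F) : Monotone F :=
  monotone_nat_of_le_succ hF.2.1

section AwayDivPow

variable {O : Type*} (B : Type*) [CommRing O] [CommRing B] [Algebra O B]
  (a : O) [IsLocalization.Away a B]

noncomputable def awayDivPow (n : ℕ) (x : O) : B := algebraMap O B x * invSelf a ^ n

theorem awayDivPow_surjective (z : B) : ∃ n x, awayDivPow B a n x = z := by
  obtain ⟨n, x, hx⟩ := surj a z
  refine ⟨n, x, ?_⟩
  rw [awayDivPow, ← hx, mul_assoc, ← mul_pow, mul_invSelf, one_pow, mul_one]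

variable {a}

theorem awayDivPow_add_pow_mul (n m : ℕ) (x : O) :
    awayDivPow B a (n + m) (a ^ m * x) = awayDivPow B a n x := by
  calc algebraMap O B (a ^ m * x) * invSelf a ^ (n + m)
      = algebraMap O B x * invSelf a ^ n * (algebraMap O B a * invSelf a) ^ m := by
        rw [map_mul, map_pow, pow_add]; ring
    _ = algebraMap O B x * invSelf a ^ n := by rw [mul_invSelf, one_pow, mul_one]

theorem awayDivPow_add (n : ℕ) (x y : O) :
    awayDivPow B a n x + awayDivPow B a n y = awayDivPow B a n (x + y) := by
  simp only [awayDivPow, map_add]; ring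

theorem awayDivPow_mul (m n : ℕ) (x y : O) :
    awayDivPow B a m x * awayDivPow B a n y = awayDivPow B a (m + n) (x * y) := by
  simp only [awayDivPow, map_mul, pow_add]; ring

theorem awayDivPow_injective (ha : a ∈ nonZeroDivisors O) (n : ℕ) :
    Function.Injective (awayDivPow B a n) := by
  have hunit : IsUnit (invSelf (S := B) a ^ n) :=
    (IsUnit.of_mul_eq_one_right _ (mul_invSelf a)).pow n
  exact hunit.isRegular.right.comp (IsLocalization.injective B (Submonoid.powers_le.mpr ha))

end AwayDivPow

section Localization

variable {O B : Type*} [CommRing O] [CommRing B] [Algebra O B] {a : O} [IsLocalization.Away a B]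
  {F : ℕ → Set O} {k : ℕ}

theorem awayDivPow_mem_image_of_mem (hk : ∀ n, ∀ x ∈ F n, a * x ∈ F (n + k)) {n j : ℕ} {x : O}
    (hx : x ∈ F ((k + 1) * n + j)) :
    awayDivPow B a n x ∈ awayDivPow B a (n + j) '' F ((k + 1) * (n + j)) := by
  refine ⟨a ^ j * x, ?_, awayDivPow_add_pow_mul B n j x⟩
  convert pow_mul_mem_of_mul_mem hk j hx using 2
  ring

theorem IsConstrainedFiltration.awayDivPow_image
    (hF : IsConstrainedFiltration O F) (ha : a ∈ nonZeroDivisors O)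
    (hk : ∀ n, ∀ x ∈ F n, a * x ∈ F (n + k)) :
    IsConstrainedFiltration B (fun n => awayDivPow B a n '' F ((k + 1) * n)) := by
  have hmono := hF.monotone_s10
  obtain ⟨hfin, -, hcover, ⟨K, hK⟩, hmul, hcard⟩ := hF
  refine ⟨fun n => ⟨(hfin _).1.image _, (hfin _).2.image _⟩, ?_, ?_, ⟨K, ?_⟩, ?_, ?_⟩
  · rintro n _ ⟨x, hx, rfl⟩
    exact awayDivPow_mem_image_of_mem hk (hmono (Nat.le_succ _) hx)
  · intro z
    obtain ⟨m, x, rfl⟩ := awayDivPow_surjective B a z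
    obtain ⟨j, hj⟩ := hcover x
    exact ⟨m + j, awayDivPow_mem_image_of_mem hk (hmono (Nat.le_add_left _ _) hj)⟩
  · rintro n _ ⟨x, hx, rfl⟩ _ ⟨y, hy, rfl⟩
    rw [awayDivPow_add]
    exact awayDivPow_mem_image_of_mem hk (hK _ x hx y hy)
  · intro b
    obtain ⟨m, c, rfl⟩ := awayDivPow_surjective B a b
    obtain ⟨kc, hkc⟩ := hmul c
    refine ⟨m + kc, ?_⟩
    rintro n _ ⟨x, hx, rfl⟩
    rw [awayDivPow_mul, show n + (m + kc) = m + n + kc by omega]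
    refine awayDivPow_mem_image_of_mem hk (hmono ?_ (hkc _ x hx))
    gcongr
    omega
  · intro ε hε
    obtain ⟨C, hC, hbound⟩ := AlmostLinearStep.of_one (c := fun n => ((F n).ncard : ℝ))
      (fun _ => Nat.cast_nonneg _) hcard k ε hε
    refine ⟨C, hC, fun n => ?_⟩
    simp only [Set.ncard_image_of_injective _ (awayDivPow_injective B ha _), Nat.mul_succ]
    exact hbound _

theorem ConstrainedlyFiltered.of_isLocalizationAway (ha : a ∈ nonZeroDivisors O)
    (h : ConstrainedlyFiltered O) : ConstrainedlyFiltered B := by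
  obtain ⟨F, hF⟩ := h
  obtain ⟨k, hk⟩ := hF.2.2.2.2.1 a
  exact ⟨_, hF.awayDivPow_image ha hk⟩

end Localization

theorem isLocalizationAway_adjoin_of_mul_eq_one {R S : Type*} [CommSemiring R] [CommSemiring S]
    [Algebra R S] (hinj : Function.Injective (algebraMap R S)) {a : R} {s : S}
    (hs : algebraMap R S a * s = 1) : IsLocalization.Away a (Algebra.adjoin R {s}) := by
  refine .mk a (.of_mul_eq_one ⟨s, Algebra.self_mem_adjoin_singleton R s⟩ (Subtype.ext hs))
    (fun ⟨y, hy⟩ => ?_) (fun x y hxy => ⟨0, by simpa using hinj (congrArg Subtype.val hxy)⟩)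
  suffices ∃ (n : ℕ) (x : R), y * algebraMap R S a ^ n = algebraMap R S x by
    obtain ⟨n, x, hx⟩ := this
    exact ⟨n, x, Subtype.ext hx⟩
  induction hy using Algebra.adjoin_induction with
  | mem y hy => exact ⟨1, 1, by rw [Set.mem_singleton_iff.mp hy, pow_one, mul_comm, hs, map_one]⟩
  | algebraMap r => exact ⟨0, r, by rw [pow_zero, mul_one]⟩
  | add y z _ _ hy hz =>
    obtain ⟨m, c, hc⟩ := hy
    obtain ⟨l, d, hd⟩ := hz
    refine ⟨m + l, c * a ^ l + d * a ^ m, ?_⟩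
    calc (y + z) * algebraMap R S a ^ (m + l)
        = y * algebraMap R S a ^ m * algebraMap R S a ^ l
          + z * algebraMap R S a ^ l * algebraMap R S a ^ m := by ring
      _ = _ := by simp only [hc, hd, map_add, map_mul, map_pow]
  | mul y z _ _ hy hz =>
    obtain ⟨m, c, hc⟩ := hy
    obtain ⟨l, d, hd⟩ := hz
    refine ⟨m + l, c * d, ?_⟩
    calc y * z * algebraMap R S a ^ (m + l)
        = y * algebraMap R S a ^ m * (z * algebraMap R S a ^ l) := by ring
      _ = _ := by rw [hc, hd, map_mul]

/-- if an integral domain `O` admits a constrained filtration and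
`a ∈ O` is nonzero, then the subring `O[a⁻¹]` of the fraction field of `O`
(generated by `O` together with `a⁻¹`) admits a constrained filtration. -/
theorem statement10 (O : Type*) [CommRing O] [IsDomain O]
    (a : O) (ha : a ≠ 0) (h : ConstrainedlyFiltered O) :
    ConstrainedlyFiltered
      ↥(Algebra.adjoin O ({(algebraMap O (FractionRing O) a)⁻¹} : Set (FractionRing O))) := by
  have hinj := IsFractionRing.injective O (FractionRing O)
  have : IsLocalization.Away a
      (Algebra.adjoin O ({(algebraMap O (FractionRing O) a)⁻¹} : Set (FractionRing O))) :=
    isLocalizationAway_adjoin_of_mul_eq_one hinj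
      (mul_inv_cancel₀ ((map_ne_zero_iff _ hinj).mpr ha))
  exact h.of_isLocalizationAway (mem_nonZeroDivisors_of_ne_zero ha)
end

section
/- Define an operation * : ℂ² × ℂ² → ℂ² by (a₁,b₁) * (a₂,b₂) := (a₁ + a₂ + b₁²b₂², b₁ + b₂), let Γ := {(x, y, x*y) : x, y ∈ ℂ²} ⊆ (ℂ²)³ be its graph, and for each integer N ≥ 1 let X_N := {0,1,…,N⁴−1} × {0,1,…,N−1} ⊆ ℂ² (integer points viewed as complex numbers). Then |X_N| = N⁵ and there is an absolute constant c > 0 such that |Γ ∩ (X_N × X_N × X_N)| ≥ c·|X_N|² for all N ≥ 1. -/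
noncomputable section

/-- The operation `(a₁,b₁) * (a₂,b₂) := (a₁ + a₂ + b₁²b₂², b₁ + b₂)` on `ℂ²`. -/
def starOp (p q : ℂ × ℂ) : ℂ × ℂ :=
  (p.1 + q.1 + p.2 ^ 2 * q.2 ^ 2, p.2 + q.2)

/-- The grid `{0,…,N⁴−1} × {0,…,N−1} ⊆ ℂ²`. -/
def gridXN (N : ℕ) : Set (ℂ × ℂ) :=
  {p | ∃ a b : ℕ, a < N ^ 4 ∧ b < N ∧ p = ((a : ℂ), (b : ℂ))}

private def castPair (ab : ℕ × ℕ) : ℂ × ℂ := ((ab.1 : ℂ), (ab.2 : ℂ))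

private lemma castPair_inj : Function.Injective castPair := by
  rintro ⟨a, b⟩ ⟨c, d⟩ h
  simp only [castPair, Prod.mk.injEq, Nat.cast_inj] at h
  exact Prod.ext h.1 h.2

private lemma grid_eq (N : ℕ) :
    gridXN N = ↑((Finset.range (N ^ 4) ×ˢ Finset.range N).image castPair) := by
  ext p
  simp only [gridXN, Set.mem_setOf_eq, Finset.coe_image, Set.mem_image,
    Finset.mem_coe, Finset.mem_product, Finset.mem_range, castPair, Prod.exists]
  constructor
  · rintro ⟨a, b, h1, h2, rfl⟩; exact ⟨a, b, ⟨h1, h2⟩, rfl⟩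
  · rintro ⟨a, b, ⟨h1, h2⟩, rfl⟩; exact ⟨a, b, h1, h2, rfl⟩

private lemma grid_ncard (N : ℕ) : (gridXN N).ncard = N ^ 5 := by
  rw [grid_eq, Set.ncard_coe_finset, Finset.card_image_of_injective _ castPair_inj,
    Finset.card_product, Finset.card_range, Finset.card_range]
  ring

private lemma arith_aux (a1 a2 P K4 M : ℕ) (h1 : a1 < M / 4 + 1) (h2 : a2 < M / 4 + 1)
    (hP : P ≤ K4) (hK : 16 * K4 ≤ M - 1) (hM : 1 ≤ M) : a1 + a2 + P < M := by
  omega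

/-- necessity of general position: with `Γ` the graph of `*` and
`X_N` the grid above, `|X_N| = N⁵` and `|Γ ∩ (X_N)³| ≥ c·|X_N|²` for an absolute
constant `c > 0`. -/
theorem statement16 :
    (∀ N : ℕ, 1 ≤ N → (gridXN N).ncard = N ^ 5) ∧
    ∃ c : ℝ, 0 < c ∧ ∀ N : ℕ, 1 ≤ N →
      (({t : (ℂ × ℂ) × (ℂ × ℂ) × (ℂ × ℂ) |
          t.1 ∈ gridXN N ∧ t.2.1 ∈ gridXN N ∧ t.2.2 ∈ gridXN N ∧
            t.2.2 = starOp t.1 t.2.1}).ncard : ℝ)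
        ≥ c * ((gridXN N).ncard : ℝ) ^ 2 := by
  refine ⟨fun N _ => grid_ncard N, 1 / 64, by norm_num, fun N hN => ?_⟩
  set T : Set ((ℂ × ℂ) × (ℂ × ℂ) × (ℂ × ℂ)) :=
    {t | t.1 ∈ gridXN N ∧ t.2.1 ∈ gridXN N ∧ t.2.2 ∈ gridXN N ∧
      t.2.2 = starOp t.1 t.2.1} with hT
  obtain ⟨A, hA⟩ : ∃ A : ℕ, A = N ^ 4 / 4 + 1 := ⟨_, rfl⟩
  obtain ⟨B, hB⟩ : ∃ B : ℕ, B = (N + 1) / 2 := ⟨_, rfl⟩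
  obtain ⟨K, hK⟩ : ∃ K : ℕ, K = (N - 1) / 2 := ⟨_, rfl⟩
  have hM1 : 1 ≤ N ^ 4 := Nat.one_le_pow _ _ (by omega)
  have hK4 : 16 * K ^ 4 ≤ N ^ 4 - 1 := by
    have h1 : (2 * K) ^ 4 ≤ (N - 1) ^ 4 := Nat.pow_le_pow_left (by omega) 4
    have h2 : (N - 1) ^ 4 < N ^ 4 := Nat.pow_lt_pow_left (by omega) (by norm_num)
    calc 16 * K ^ 4 = (2 * K) ^ 4 := by ring
    _ ≤ (N - 1) ^ 4 := h1
    _ ≤ N ^ 4 - 1 := by omega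
  have hAle : A ≤ N ^ 4 := by omega
  have hBle : B ≤ N := by omega
  -- the injection
  set g : (ℕ × ℕ) × (ℕ × ℕ) → (ℂ × ℂ) × (ℂ × ℂ) × (ℂ × ℂ) :=
    fun q => (castPair q.1, castPair q.2, starOp (castPair q.1) (castPair q.2)) with hg
  have hginj : Function.Injective g := by
    intro x y h
    simp only [hg, Prod.mk.injEq] at h
    exact Prod.ext (castPair_inj h.1) (castPair_inj h.2.1)
  set S : Finset ((ℕ × ℕ) × (ℕ × ℕ)) :=
    (Finset.range A ×ˢ Finset.range B) ×ˢ (Finset.range A ×ˢ Finset.range B) with hS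
  have hmem : ∀ a b : ℕ, a < A → b < B → castPair (a, b) ∈ gridXN N := by
    intro a b ha hb
    exact ⟨a, b, lt_of_lt_of_le ha hAle, lt_of_lt_of_le hb hBle, rfl⟩
  have hsub : ↑(S.image g) ⊆ T := by
    intro t ht
    simp only [Finset.coe_image, Set.mem_image, Finset.mem_coe, hS,
      Finset.mem_product, Finset.mem_range] at ht
    obtain ⟨⟨⟨a1, b1⟩, ⟨a2, b2⟩⟩, hq, rfl⟩ := ht
    dsimp only at hq
    obtain ⟨⟨ha1, hb1⟩, ha2, hb2⟩ := hq
    refine ⟨hmem a1 b1 ha1 hb1, hmem a2 b2 ha2 hb2, ?_, rfl⟩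
    have hb1K : b1 ≤ K := by omega
    have hb2K : b2 ≤ K := by omega
    have hp : b1 ^ 2 * b2 ^ 2 ≤ K ^ 4 := by
      calc b1 ^ 2 * b2 ^ 2 ≤ K ^ 2 * K ^ 2 :=
            Nat.mul_le_mul (Nat.pow_le_pow_left hb1K 2) (Nat.pow_le_pow_left hb2K 2)
      _ = K ^ 4 := by ring
    refine ⟨a1 + a2 + b1 ^ 2 * b2 ^ 2, b1 + b2,
      arith_aux a1 a2 _ _ _ (by omega) (by omega) hp hK4 hM1, by omega, ?_⟩
    simp only [hg, starOp, castPair, Prod.mk.injEq]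
    constructor <;> push_cast <;> ring
  have hgridfin : (gridXN N).Finite := by
    rw [grid_eq]; exact (Finset.range (N ^ 4) ×ˢ Finset.range N).image castPair |>.finite_toSet
  have hTfin : T.Finite := by
    refine Set.Finite.subset (hgridfin.prod (hgridfin.prod hgridfin)) ?_
    rintro ⟨x, y, z⟩ ⟨h1, h2, h3, _⟩
    exact ⟨h1, h2, h3⟩
  have hcard : (S.image g).card = A * B * (A * B) := by
    rw [Finset.card_image_of_injective _ hginj]
    simp [hS, Nat.mul_comm]
  have hle : A * B * (A * B) ≤ T.ncard := by
    have := Set.ncard_le_ncard hsub hTfin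
    rwa [Set.ncard_coe_finset, hcard] at this
  -- real inequality
  have hA4 : (N : ℝ) ^ 4 ≤ 4 * A := by
    have : N ^ 4 ≤ 4 * A := by omega
    exact_mod_cast this
  have hB2 : (N : ℝ) ≤ 2 * B := by
    have : N ≤ 2 * B := by omega
    exact_mod_cast this
  have hx : (0 : ℝ) ≤ (N : ℝ) := Nat.cast_nonneg N
  have e1 : ((N : ℝ) ^ 4) ^ 2 ≤ (4 * A) ^ 2 := by
    exact pow_le_pow_left₀ (by positivity) hA4 2
  have e2 : (N : ℝ) ^ 2 ≤ (2 * B) ^ 2 := by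
    exact pow_le_pow_left₀ hx hB2 2
  have e3 : ((N : ℝ) ^ 4) ^ 2 * (N : ℝ) ^ 2 ≤ (4 * A) ^ 2 * (2 * B) ^ 2 :=
    mul_le_mul e1 e2 (by positivity) (by positivity)
  have hcast : ((A * B * (A * B) : ℕ) : ℝ) ≤ (T.ncard : ℝ) := by exact_mod_cast hle
  rw [grid_ncard]
  push_cast at hcast ⊢
  nlinarith [hcast, e3]
end
end

section
/- Let V := {(x,y,z,w) ∈ (ℂ∖{0})⁴ : x·z·w = 1 and y·z²·w² = 1}, and for each integer M ≥ 1 let X_M := {2^k : k ∈ ℤ, −M ≤ k ≤ M} ⊆ ℂ∖{0}. Then |X_M| = 2M + 1 and there is an absolute constant c > 0 such that |V ∩ (X_M × X_M × X_M × X_M)| ≥ c·|X_M|² for all M ≥ 1. -/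
noncomputable section

def geomXM (M : ℕ) : Set ℂ :=
  {z | ∃ k : ℤ, |k| ≤ (M : ℤ) ∧ z = (2 : ℂ) ^ k}

lemma two_zpow_inj : Function.Injective (fun k : ℤ ↦ (2 : ℂ) ^ k) := by
  intro a b h
  have : ‖(2:ℂ)^a‖ = ‖(2:ℂ)^b‖ := by simp only at h; rw [h]
  rw [norm_zpow, norm_zpow] at this
  have h2 : ‖(2:ℂ)‖ = (2:ℝ) := by simp
  rw [h2] at this
  exact zpow_right_injective₀ (by norm_num) (by norm_num) this

lemma geomXM_eq (M : ℕ) : geomXM M = (fun k : ℤ ↦ (2:ℂ)^k) '' (Finset.Icc (-(M:ℤ)) M) := by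
  ext z
  simp only [geomXM, Set.mem_setOf_eq, Set.mem_image, Finset.coe_Icc, Set.mem_Icc]
  constructor
  · rintro ⟨k, hk, rfl⟩; rw [abs_le] at hk; exact ⟨k, ⟨hk.1, hk.2⟩, rfl⟩
  · rintro ⟨k, ⟨h1, h2⟩, rfl⟩; exact ⟨k, abs_le.2 ⟨h1, h2⟩, rfl⟩

lemma geomXM_ncard (M : ℕ) : (geomXM M).ncard = 2 * M + 1 := by
  rw [geomXM_eq, Set.ncard_image_of_injective _ two_zpow_inj, Set.ncard_coe_finset,
    Int.card_Icc]
  omega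

lemma geomXM_finite (M : ℕ) : (geomXM M).Finite := by
  rw [geomXM_eq]; exact (Finset.Icc _ _).finite_toSet.image _

def gmap (p : ℤ × ℤ) : Fin 4 → ℂ :=
  ![(2:ℂ) ^ (-(p.1 + p.2)), (2:ℂ) ^ (-(2 * (p.1 + p.2))), (2:ℂ) ^ p.1, (2:ℂ) ^ p.2]

lemma gmap_inj : Function.Injective gmap := by
  intro p q h
  have h2 : gmap p 2 = gmap q 2 := by rw [h]
  have h3 : gmap p 3 = gmap q 3 := by rw [h]
  simp only [gmap, Matrix.cons_val_two, Matrix.cons_val_three, Matrix.tail_cons,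
    Matrix.head_cons] at h2 h3
  have e1 := two_zpow_inj h2
  have e2 := two_zpow_inj h3
  exact Prod.ext e1 e2

lemma mem_geomXM {M : ℕ} {k : ℤ} (hk : |k| ≤ (M:ℤ)) : (2:ℂ)^k ∈ geomXM M := ⟨k, hk, rfl⟩

/-- the special subgroup
`V = {(x,y,z,w) ∈ (ℂ∖{0})⁴ : xzw = 1, yz²w² = 1}` of the torus admits no
power-saving, as witnessed by geometric progressions: `|X_M| = 2M + 1` and
`|V ∩ X_M⁴| ≥ c·|X_M|²` for an absolute constant `c > 0`. -/
theorem statement17 :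
    (∀ M : ℕ, 1 ≤ M → (geomXM M).ncard = 2 * M + 1) ∧
    ∃ c : ℝ, 0 < c ∧ ∀ M : ℕ, 1 ≤ M →
      (({x : Fin 4 → ℂ | (∀ i, x i ∈ geomXM M) ∧ (∀ i, x i ≠ 0) ∧
          x 0 * x 2 * x 3 = 1 ∧ x 1 * x 2 ^ 2 * x 3 ^ 2 = 1}).ncard : ℝ)
        ≥ c * ((geomXM M).ncard : ℝ) ^ 2 := by
  refine ⟨fun M _ => geomXM_ncard M, 1/81, by norm_num, fun M hM => ?_⟩
  set S : Set (Fin 4 → ℂ) := {x : Fin 4 → ℂ | (∀ i, x i ∈ geomXM M) ∧ (∀ i, x i ≠ 0) ∧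
      x 0 * x 2 * x 3 = 1 ∧ x 1 * x 2 ^ 2 * x 3 ^ 2 = 1} with hS
  set N : ℕ := M / 4 with hN
  set T : Finset (ℤ × ℤ) := Finset.Icc (-(N:ℤ)) N ×ˢ Finset.Icc (-(N:ℤ)) N with hT
  -- the image of T under gmap is contained in S
  have hsub : gmap '' T ⊆ S := by
    rintro x ⟨⟨a, b⟩, hab, rfl⟩
    simp only [hT, Finset.mem_coe, Finset.mem_product, Finset.mem_Icc] at hab
    obtain ⟨⟨ha1, ha2⟩, hb1, hb2⟩ := hab
    have hNM : 4 * (N:ℤ) ≤ M := by push_cast [hN]; omega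
    constructor
    · intro i
      fin_cases i
      · exact mem_geomXM (k := -(a+b)) (by rw [abs_le]; omega)
      · exact mem_geomXM (k := -(2*(a+b))) (by rw [abs_le]; omega)
      · exact mem_geomXM (k := a) (by rw [abs_le]; omega)
      · exact mem_geomXM (k := b) (by rw [abs_le]; omega)
    refine ⟨fun i => ?_, ?_, ?_⟩
    · fin_cases i <;> exact zpow_ne_zero _ two_ne_zero
    · show (2:ℂ) ^ (-(a + b)) * (2:ℂ) ^ a * (2:ℂ) ^ b = 1
      rw [← zpow_add₀ (two_ne_zero), ← zpow_add₀ (two_ne_zero)]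
      rw [show -(a + b) + a + b = 0 by ring, zpow_zero]
    · show (2:ℂ) ^ (-(2 * (a + b))) * ((2:ℂ) ^ a) ^ 2 * ((2:ℂ) ^ b) ^ 2 = 1
      rw [← zpow_natCast ((2:ℂ)^a), ← zpow_natCast ((2:ℂ)^b), ← zpow_mul, ← zpow_mul,
        ← zpow_add₀ (two_ne_zero), ← zpow_add₀ (two_ne_zero)]
      rw [show -(2 * (a + b)) + a * (2:ℕ) + b * (2:ℕ) = 0 by push_cast; ring, zpow_zero]
  -- S is finite
  have hSfin : S.Finite := by
    apply Set.Finite.subset (Set.Finite.pi (fun _ : Fin 4 => geomXM_finite M))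
    intro x hx
    exact fun i _ => hx.1 i
  -- count
  have hcard : (2 * N + 1) ^ 2 ≤ S.ncard := by
    have h1 : (gmap '' T).ncard = T.card := by
      rw [Set.ncard_image_of_injective _ gmap_inj, Set.ncard_coe_finset]
    have h2 : T.card = (2 * N + 1) ^ 2 := by
      rw [hT, Finset.card_product, Int.card_Icc]
      have : ((N:ℤ) + 1 - -(N:ℤ)).toNat = 2 * N + 1 := by omega
      rw [this]; ring
    calc (2 * N + 1) ^ 2 = (gmap '' T).ncard := by rw [h1, h2]
      _ ≤ S.ncard := Set.ncard_le_ncard hsub hSfin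
  rw [geomXM_ncard]
  have key : (2 * M + 1 : ℝ) ≤ 9 * (2 * N + 1 : ℕ) := by
    have : 2 * M + 1 ≤ 9 * (2 * N + 1) := by rw [hN]; omega
    push_cast
    exact_mod_cast by exact_mod_cast (by push_cast; exact_mod_cast Nat.cast_le.mpr this : (2 * M + 1 : ℝ) ≤ ((9 * (2 * N + 1) : ℕ) : ℝ))
  have h0 : (0:ℝ) ≤ (2 * M + 1 : ℝ) := by positivity
  have hle : ((2 * N + 1 : ℕ)^2 : ℝ) ≤ (S.ncard : ℝ) := by exact_mod_cast hcard
  have : (1/81 : ℝ) * (2 * M + 1 : ℝ)^2 ≤ ((2 * N + 1 : ℕ) : ℝ)^2 := by nlinarith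
  calc (1/81 : ℝ) * ((2 * M + 1 : ℕ) : ℝ)^2 ≤ ((2 * N + 1 : ℕ) : ℝ)^2 := by push_cast; push_cast at this; linarith
    _ ≤ (S.ncard : ℝ) := by push_cast at hle ⊢; linarith
end
end
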